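/- (Accuracy theorem) Let δ ∈ (0,1/2], γ ∈ (0,1/4), and σ = δ/log(|F|/γ). Let X₁,…,Xₙ be i.i.d. ∼ ν on Ω and Z₁,…,Z_m i.i.d. ∼ μ with κ(ν‖μ) ≤ K, where min(n,k) ≥ δ^{−2} log(|F|/γ) and m ≥ δ^{−2} K|F|/γ, and assume the constant function 1 belongs to F. Let λ(f), f ∈ F, be independent Laplace(σ) variables, let h* be a probability density on Ω* = {Z₁,…,Z_m} minimizing max_{f∈F} |∑_i f(Z_i)h(Z_i) − (1/n)∑_j f(X_j) − λ(f)| over densities h, and let Y₁,…,Y_k be drawn i.i.d. from Ω* with density h*. Then with probability at least 1 − 4γ, max_{f∈F} |(1/k)∑_{i=1}^k f(Y_i) − (1/n)∑_{j=1}^n f(X_j)| ≤ 8δ. -/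

import Mathlib

/-!
Outside three rare events the minimiser `h*` is already `6δ`-accurate: some noise `|λ(f)|`
exceeds `δ` (union bound over the Laplace tails, probability `≤ γ`); some importance-weighted
sum `∑ⱼ f(Zⱼ) (dν/dμ)(Zⱼ)` misses `m ∫ f dν` by `mδ` (Chebyshev, the variance being at most
`κ(ν‖μ) ≤ K`, probability `≤ γ`); some empirical mean of `f(X)` misses `∫ f dν` by `2δ`
(Hoeffding, probability `≤ γ/2`). Otherwise the normalised importance weights
`(dν/dμ)(Zⱼ) / ∑ₗ (dν/dμ)(Zₗ)` form a density on `Ω*` (the constant test function `1` controls the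
normaliser) with objective value `≤ 5δ`, so `h*` has value `≤ 5δ` as well. Given `Ω*` and `h*`,
Hoeffding's inequality for the bootstrap sample costs another `2δ` outside an event of
probability `≤ γ/2`, for a total failure probability of `3γ`.
-/

open MeasureTheory ProbabilityTheory Finset

section MeasureFacts

variable {Θ : Type*} [MeasurableSpace Θ] {P : Measure Θ}

theorem measureReal_iUnion_le_card_mul {ι : Type*} [Fintype ι] {s : ι → Set Θ} {b : ℝ}
    (h : ∀ i, P.real (s i) ≤ b) : P.real (⋃ i, s i) ≤ Fintype.card ι * b :=
  (measureReal_iUnion_fintype_le s).trans <| by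
    simpa using Finset.sum_le_card_nsmul univ _ b fun i _ => h i

theorem one_sub_le_measureReal_of_compl_subset [IsProbabilityMeasure P] {s t : Set Θ}
    (hst : sᶜ ⊆ t) {b : ℝ} (ht : P.real t ≤ b) : 1 - b ≤ P.real s := by
  have := measureReal_union_le (μ := P) s sᶜ
  rw [Set.union_compl_self, probReal_univ] at this
  linarith [measureReal_mono (μ := P) hst]

theorem measureReal_prod_le_of_forall_measureReal_slice_le {Θ' : Type*} [MeasurableSpace Θ']
    [IsProbabilityMeasure P] {P' : Measure Θ'} [IsFiniteMeasure P'] {s : Set (Θ × Θ')}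
    (hs : MeasurableSet s) {b : ℝ} (hb : 0 ≤ b) (h : ∀ θ, P'.real (Prod.mk θ ⁻¹' s) ≤ b) :
    (P.prod P').real s ≤ b := by
  refine ENNReal.toReal_le_of_le_ofReal hb ?_
  rw [Measure.prod_apply hs]
  calc _ ≤ ∫⁻ _, ENNReal.ofReal b ∂P :=
        lintegral_mono fun θ => (ENNReal.le_ofReal_iff_toReal_le (by finiteness) hb).2 (h θ)
    _ = _ := by simp

theorem one_sub_le_measureReal_prod_of_forall_mem {Θ' : Type*} [MeasurableSpace Θ']
    [IsProbabilityMeasure P] {P' : Measure Θ'} [IsProbabilityMeasure P'] {s C : Set (Θ × Θ')}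
    {A : Set Θ} (hs : ∀ p, p.1 ∉ A → p ∉ C → p ∈ s) {a b : ℝ} (hA : P.real A ≤ a)
    (hC : (P.prod P').real C ≤ b) : 1 - (a + b) ≤ (P.prod P').real s := by
  refine one_sub_le_measureReal_of_compl_subset (t := A ×ˢ Set.univ ∪ C) (fun p hp => ?_) ?_
  · by_contra h
    simp only [Set.mem_union, Set.mem_prod, Set.mem_univ, and_true, not_or] at h
    exact hp (hs p h.1 h.2)
  · refine (measureReal_union_le _ _).trans (add_le_add ?_ hC)
    rwa [measureReal_prod_prod, probReal_univ, mul_one]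

theorem integral_comp_eq_sum_mul_measureReal [IsFiniteMeasure P] {α : Type*} [Fintype α]
    [MeasurableSpace α] [MeasurableSingletonClass α] {Y : Θ → α} (hY : Measurable Y)
    (φ : α → ℝ) : ∫ θ, φ (Y θ) ∂P = ∑ a, φ a * P.real {θ | Y θ = a} := by
  rw [← integral_map hY.aemeasurable (by fun_prop), integral_fintype Integrable.of_finite]
  simp [map_measureReal_apply hY (measurableSet_singleton _), mul_comm]
  rfl

end MeasureFacts

section Concentration

variable {Θ : Type*} [MeasurableSpace Θ] {P : Measure Θ}

theorem measureReal_lt_abs_avg_sub_le [IsProbabilityMeasure P] {N : ℕ} {W : Fin N → Θ → ℝ}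
    (hindep : iIndepFun W P) (hmeas : ∀ j, Measurable (W j)) (hbdd : ∀ j ω, |W j ω| ≤ 1)
    {c : ℝ} (hc : ∀ j, P[W j] = c) {t : ℝ} (ht : 0 ≤ t) :
    P.real {ω | t < |(N : ℝ)⁻¹ * ∑ j, W j ω - c|} ≤ 2 * Real.exp (-(N * t ^ 2) / 2) := by
  have hsubG : ∀ j ∈ (univ : Finset (Fin N)),
      HasSubgaussianMGF (fun ω => W j ω - c) 1 P := by
    intro j _
    have := hasSubgaussianMGF_of_mem_Icc (hmeas j).aemeasurable
      (ae_of_all P fun ω => abs_le.1 (hbdd j ω))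
    rw [hc j] at this
    convert this using 1
    norm_num
  have hS := HasSubgaussianMGF.sum_of_iIndepFun
    (hindep.comp (fun _ x => x - c) fun _ => measurable_id.sub_const c) hsubG
  have htail : ∀ {S : Θ → ℝ}, HasSubgaussianMGF S (∑ _j : Fin N, 1) P →
      P.real {ω | N * t ≤ S ω} ≤ Real.exp (-(N * t ^ 2) / 2) := fun h => by
    refine (h.measure_ge_le (by positivity)).trans_eq ?_
    rcases eq_or_ne (N : ℝ) 0 with hN | hN
    · simp [hN]
    · simp only [sum_const, card_univ, Fintype.card_fin, nsmul_eq_mul, mul_one, NNReal.coe_natCast]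
      congr 1
      field_simp
  have hsub : {ω | t < |(N : ℝ)⁻¹ * ∑ j, W j ω - c|} ⊆
      {ω | N * t ≤ ∑ j, (W j ω - c)} ∪ {ω | N * t ≤ (-fun ω => ∑ j, (W j ω - c)) ω} := by
    intro ω hω
    have hsum : ∑ j, (W j ω - c) = N * ((N : ℝ)⁻¹ * ∑ j, W j ω - c) := by
      obtain rfl | hN := N.eq_zero_or_pos
      · simp
      · simp [sum_sub_distrib]; field_simp
    have : N * t ≤ |∑ j, (W j ω - c)| := by
      rw [hsum, abs_mul, Nat.abs_cast]
      exact mul_le_mul_of_nonneg_left hω.le (Nat.cast_nonneg N)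
    rcases le_abs'.1 this with h | h
    · exact Or.inr (show N * t ≤ -∑ j, (W j ω - c) by linarith)
    · exact Or.inl h
  calc _ ≤ _ := measureReal_mono hsub
    _ ≤ _ := measureReal_union_le _ _
    _ ≤ _ := add_le_add (htail hS) (htail hS.neg)
    _ = _ := by ring

theorem measureReal_le_abs_sum_sub_le [IsProbabilityMeasure P] {Ω : Type*} [MeasurableSpace Ω]
    {μ : Measure Ω} {N : ℕ} (hN : 0 < N) {Z : Fin N → Θ → Ω} (hZ : ∀ j, Measurable (Z j))
    (hlaw : ∀ j, P.map (Z j) = μ) (hpair : Pairwise fun j j' => IndepFun (Z j) (Z j') P)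
    {φ : Ω → ℝ} (hφm : Measurable φ) (hφ : MemLp φ 2 μ) {ε : ℝ} (hε : 0 < ε) :
    P.real {θ | N * ε ≤ |∑ j, φ (Z j θ) - N * ∫ x, φ x ∂μ|} ≤
      (∫ x, φ x ^ 2 ∂μ) / (N * ε ^ 2) := by
  have hmem : ∀ j, MemLp (fun θ => φ (Z j θ)) 2 P := fun j =>
    ((hlaw j).symm ▸ hφ).comp_of_map (hZ j).aemeasurable
  have hmap : ∀ {ψ : Ω → ℝ}, Measurable ψ → ∀ j, ∫ θ, ψ (Z j θ) ∂P = ∫ x, ψ x ∂μ :=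
    fun hψ j => by rw [← hlaw j, integral_map (hZ j).aemeasurable hψ.aestronglyMeasurable]
  set S : Θ → ℝ := ∑ j, fun θ => φ (Z j θ) with hS
  have hSapply : ∀ θ, S θ = ∑ j, φ (Z j θ) := fun θ => Finset.sum_apply θ _ _
  have hvar : variance S P ≤ N * ∫ x, φ x ^ 2 ∂μ := by
    rw [hS, IndepFun.variance_sum (fun j _ => hmem j)
      fun j _ j' _ hjj' => (hpair hjj').comp hφm hφm]
    refine (sum_le_sum fun j _ => (variance_le_expectation_sq (hmem j).1).trans_eq
      (hmap (hφm.pow_const 2) j)).trans_eq ?_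
    simp
  have hmean : P[S] = N * ∫ x, φ x ∂μ := by
    simp_rw [hSapply]
    rw [integral_finsetSum _ fun j _ => (hmem j).integrable one_le_two]
    simp [hmap hφm]
  have hcheb := meas_ge_le_variance_div_sq (memLp_finsetSum' univ fun j _ => hmem j)
    (mul_pos (Nat.cast_pos.2 hN) hε)
  simp_rw [← hS, hmean, hSapply] at hcheb
  rw [measureReal_def]
  refine ENNReal.toReal_le_of_le_ofReal (by positivity) (hcheb.trans (ENNReal.ofReal_le_ofReal ?_))
  have hN' : (N : ℝ) ≠ 0 := by positivity
  calc _ ≤ N * (∫ x, φ x ^ 2 ∂μ) / (N * ε) ^ 2 := by gcongr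
    _ = _ := by field_simp

theorem measureReal_iUnion_lt_abs_sample_avg_sub_le [IsProbabilityMeasure P] {Ω ι : Type*}
    [MeasurableSpace Ω] [Fintype ι] {ν : Measure Ω} {N : ℕ} {X : Fin N → Θ → Ω}
    (hX : ∀ l, Measurable (X l)) (hindep : iIndepFun X P) (hlaw : ∀ l, P.map (X l) = ν)
    {f : ι → Ω → ℝ} (hf : ∀ i, Measurable (f i)) (hfbdd : ∀ i x, |f i x| ≤ 1)
    {t : ℝ} (ht : 0 ≤ t) :
    P.real (⋃ i, {θ | t < |(N : ℝ)⁻¹ * ∑ l, f i (X l θ) - ∫ x, f i x ∂ν|}) ≤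
      Fintype.card ι * (2 * Real.exp (-(N * t ^ 2) / 2)) :=
  measureReal_iUnion_le_card_mul fun i =>
    measureReal_lt_abs_avg_sub_le (hindep.comp (fun _ => f i) fun _ => hf i)
      (fun l => (hf i).comp (hX l)) (fun l θ => hfbdd i (X l θ))
      (fun l => by
        rw [Function.comp_def, ← hlaw l,
          integral_map (hX l).aemeasurable (hf i).aestronglyMeasurable]) ht

theorem measureReal_iUnion_lt_abs_resample_avg_sub_le [IsProbabilityMeasure P] {ι α : Type*}
    [Fintype ι] [Fintype α] [MeasurableSpace α] [DiscreteMeasurableSpace α] {N : ℕ}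
    {Y : Fin N → Θ → α} (hY : ∀ l, Measurable (Y l)) (hindep : iIndepFun Y P) {w : α → ℝ}
    (hw : ∀ a, 0 ≤ w a) (hlaw : ∀ l a, P {θ | Y l θ = a} = ENNReal.ofReal (w a))
    {u : ι → α → ℝ} (hu : ∀ i a, |u i a| ≤ 1) {t : ℝ} (ht : 0 ≤ t) :
    P.real (⋃ i, {θ | t < |(N : ℝ)⁻¹ * ∑ l, u i (Y l θ) - ∑ a, u i a * w a|}) ≤
      Fintype.card ι * (2 * Real.exp (-(N * t ^ 2) / 2)) :=
  measureReal_iUnion_le_card_mul fun i =>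
    measureReal_lt_abs_avg_sub_le (hindep.comp (fun _ => u i) fun _ => .of_discrete)
      (fun l => Measurable.of_discrete.comp (hY l)) (fun l θ => hu i (Y l θ))
      (fun l => by
        rw [Function.comp_def, integral_comp_eq_sum_mul_measureReal (hY l)]
        exact sum_congr rfl fun a _ => by
          rw [measureReal_def, hlaw, ENNReal.toReal_ofReal (hw a)]) ht

theorem measureReal_prod_iUnion_lt_abs_resample_avg_sub_le {Θ₀ Θ₁ Ω ι : Type*}
    [MeasurableSpace Θ₀] [MeasurableSpace Θ₁] [MeasurableSpace Ω] [Fintype ι]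
    {P₀ : Measure Θ₀} [IsProbabilityMeasure P₀] {P₁ : Measure Θ₁} [IsProbabilityMeasure P₁]
    {m k : ℕ} {Z : Fin m → Θ₀ → Ω} (hZ : ∀ j, Measurable (Z j)) {w : Θ₀ → Fin m → ℝ}
    (hwm : ∀ j, Measurable fun θ => w θ j) (hw : ∀ θ j, 0 ≤ w θ j)
    {Y : Fin k → Θ₀ → Θ₁ → Fin m} (hYm : ∀ l, Measurable fun p : Θ₀ × Θ₁ => Y l p.1 p.2)
    (hindep : ∀ θ, iIndepFun (fun l => Y l θ) P₁)
    (hlaw : ∀ θ l j, P₁ {θ' | Y l θ θ' = j} = ENNReal.ofReal (w θ j))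
    {f : ι → Ω → ℝ} (hf : ∀ i, Measurable (f i)) (hfbdd : ∀ i x, |f i x| ≤ 1)
    {t : ℝ} (ht : 0 ≤ t) :
    (P₀.prod P₁).real (⋃ i, {p | t <
        |(k : ℝ)⁻¹ * ∑ l, f i (Z (Y l p.1 p.2) p.1) - ∑ j, f i (Z j p.1) * w p.1 j|}) ≤
      Fintype.card ι * (2 * Real.exp (-(k * t ^ 2) / 2)) := by
  have hZY : ∀ i l, Measurable fun p : Θ₀ × Θ₁ => f i (Z (Y l p.1 p.2) p.1) := fun i l =>
    (hf i).comp <| (measurable_from_prod_countable_left (f := fun q : Θ₀ × Fin m => Z q.2 q.1)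
      hZ).comp (measurable_fst.prodMk (hYm l))
  have hmeas : MeasurableSet (⋃ i, {p : Θ₀ × Θ₁ | t <
      |(k : ℝ)⁻¹ * ∑ l, f i (Z (Y l p.1 p.2) p.1) - ∑ j, f i (Z j p.1) * w p.1 j|}) :=
    .iUnion fun i => measurableSet_lt measurable_const <|
      (((measurable_sum _ fun l _ => hZY i l).const_mul _).sub
        (measurable_sum _ fun j _ => ((hf i).comp ((hZ j).comp measurable_fst)).mul
          ((hwm j).comp measurable_fst))).abs
  refine measureReal_prod_le_of_forall_measureReal_slice_le hmeas (by positivity) fun θ => ?_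
  rw [Set.preimage_iUnion]
  exact measureReal_iUnion_lt_abs_resample_avg_sub_le (Y := fun l => Y l θ)
    (fun l => (hYm l).comp measurable_prodMk_left) (hindep θ) (hw θ) (hlaw θ)
    (u := fun i j => f i (Z j θ)) (fun i j => hfbdd i _) ht

end Concentration

section ImportanceWeights

variable {Ω : Type*} [MeasurableSpace Ω] {μ ν : Measure Ω}

theorem one_le_integral_sq_toReal_rnDeriv [IsProbabilityMeasure μ] [IsProbabilityMeasure ν]
    (hac : ν ≪ μ) (hint : Integrable (fun x => (ν.rnDeriv μ x).toReal ^ 2) μ) :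
    1 ≤ ∫ x, (ν.rnDeriv μ x).toReal ^ 2 ∂μ := by
  have hmem : MemLp (fun x => (ν.rnDeriv μ x).toReal) 2 μ :=
    (memLp_two_iff_integrable_sq
      (Measure.measurable_rnDeriv ν μ).ennreal_toReal.aestronglyMeasurable).2 hint
  have := variance_nonneg (fun x => (ν.rnDeriv μ x).toReal) μ
  rw [variance_eq_sub hmem, Measure.integral_toReal_rnDeriv hac] at this
  simpa using this

theorem memLp_two_mul_toReal_rnDeriv
    (hint : Integrable (fun x => (ν.rnDeriv μ x).toReal ^ 2) μ) {φ : Ω → ℝ} (hφ : Measurable φ)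
    (hφbdd : ∀ x, |φ x| ≤ 1) : MemLp (fun x => φ x * (ν.rnDeriv μ x).toReal) 2 μ := by
  have hg := (Measure.measurable_rnDeriv ν μ).ennreal_toReal
  refine ((memLp_two_iff_integrable_sq hg.aestronglyMeasurable).2 hint).of_le
    (hφ.mul hg).aestronglyMeasurable (ae_of_all _ fun x => ?_)
  simp only [norm_mul, Real.norm_eq_abs]
  exact mul_le_of_le_one_left (abs_nonneg _) (hφbdd x)

theorem measureReal_iUnion_le_abs_sum_mul_rnDeriv_sub_le [IsProbabilityMeasure μ]
    [SigmaFinite ν] (hac : ν ≪ μ) (hint : Integrable (fun x => (ν.rnDeriv μ x).toReal ^ 2) μ)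
    {ι : Type*} [Fintype ι] {f : ι → Ω → ℝ} (hf : ∀ i, Measurable (f i))
    (hfbdd : ∀ i x, |f i x| ≤ 1) {Θ : Type*} [MeasurableSpace Θ] {P : Measure Θ}
    [IsProbabilityMeasure P] {N : ℕ} (hN : 0 < N) {Z : Fin N → Θ → Ω}
    (hZ : ∀ j, Measurable (Z j)) (hlaw : ∀ j, P.map (Z j) = μ)
    (hpair : Pairwise fun j j' => IndepFun (Z j) (Z j') P) {ε : ℝ} (hε : 0 < ε) :
    P.real (⋃ i, {θ | N * ε ≤
        |∑ j, f i (Z j θ) * (ν.rnDeriv μ (Z j θ)).toReal - N * ∫ x, f i x ∂ν|}) ≤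
      Fintype.card ι * ((∫ x, (ν.rnDeriv μ x).toReal ^ 2 ∂μ) / (N * ε ^ 2)) := by
  refine measureReal_iUnion_le_card_mul fun i => ?_
  have hg := (Measure.measurable_rnDeriv ν μ).ennreal_toReal
  have hmem := memLp_two_mul_toReal_rnDeriv hint (hf i) (hfbdd i)
  have hmean : ∫ x, f i x * (ν.rnDeriv μ x).toReal ∂μ = ∫ x, f i x ∂ν := by
    simp_rw [mul_comm (f i _)]
    exact integral_toReal_rnDeriv_mul hac
  have hsq : ∫ x, (f i x * (ν.rnDeriv μ x).toReal) ^ 2 ∂μ ≤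
      ∫ x, (ν.rnDeriv μ x).toReal ^ 2 ∂μ := by
    refine integral_mono hmem.integrable_sq hint fun x => ?_
    rw [mul_pow]
    exact mul_le_of_le_one_left (sq_nonneg _) ((sq_le_one_iff_abs_le_one _).2 (hfbdd i x))
  have := measureReal_le_abs_sum_sub_le hN hZ hlaw hpair (φ := fun x => f i x * _)
    ((hf i).mul hg) hmem hε
  rw [hmean] at this
  exact this.trans (by gcongr)

end ImportanceWeights

section Deterministic

theorem abs_sum_mul_div_sum_sub_le {κ : Type*} [Fintype κ] {u w : κ → ℝ} (hu : ∀ j, |u j| ≤ 1)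
    (hw : ∀ j, 0 ≤ w j) {M c δ : ℝ} (hM : 0 < M) (hW : 0 < ∑ j, w j)
    (hwM : |∑ j, w j - M| ≤ M * δ) (huw : |∑ j, u j * w j - M * c| ≤ M * δ) :
    |∑ j, u j * (w j / ∑ j', w j') - c| ≤ 2 * δ := by
  set W := ∑ j, w j
  set S := ∑ j, u j * w j
  have hS : |S| ≤ W := (abs_sum_le_sum_abs _ _).trans <| sum_le_sum fun j _ => by
    rw [abs_mul, abs_of_nonneg (hw j)]
    exact mul_le_of_le_one_left (hw j) (hu j)
  have hsplit : ∑ j, u j * (w j / W) - c = S * (M - W) / (W * M) + (S - M * c) / M := by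
    simp_rw [← mul_div_assoc, ← sum_div]
    field_simp
    ring
  rw [hsplit]
  calc _ ≤ |S| * |W - M| / (W * M) + |S - M * c| / M := by
        refine (abs_add_le _ _).trans_eq ?_
        rw [abs_div, abs_div, abs_mul, abs_sub_comm M, abs_of_pos (mul_pos hW hM), abs_of_pos hM]
    _ ≤ W * (M * δ) / (W * M) + M * δ / M := by gcongr
    _ = 2 * δ := by field_simp; ring

theorem abs_sub_le_of_sup'_abs_sub_sub_le {ι : Type*} [Fintype ι] [Nonempty ι]
    {A B a l c : ι → ℝ} {ε₁ ε₂ ε₃ : ℝ}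
    (hmin : univ.sup' univ_nonempty (fun i => |A i - a i - l i|) ≤
      univ.sup' univ_nonempty (fun i => |B i - a i - l i|))
    (hB : ∀ i, |B i - c i| ≤ ε₁) (ha : ∀ i, |a i - c i| ≤ ε₂) (hl : ∀ i, |l i| ≤ ε₃) (i : ι) :
    |A i - a i| ≤ ε₁ + ε₂ + 2 * ε₃ := by
  have hBsup : univ.sup' univ_nonempty (fun i => |B i - a i - l i|) ≤ ε₁ + ε₂ + ε₃ :=
    sup'_le _ _ fun j _ => by
      obtain ⟨hB₁, hB₂⟩ := abs_le.1 (hB j)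
      obtain ⟨ha₁, ha₂⟩ := abs_le.1 (ha j)
      obtain ⟨hl₁, hl₂⟩ := abs_le.1 (hl j)
      exact abs_le.2 ⟨by linarith, by linarith⟩
  have hA := (le_sup' (fun i => |A i - a i - l i|) (mem_univ i)).trans (hmin.trans hBsup)
  calc |A i - a i| ≤ |A i - a i - l i| + |l i| := by
        simpa using abs_add_le (A i - a i - l i) (l i)
    _ ≤ _ := by linarith [hl i]

theorem abs_sum_mul_sub_le_of_minimizer {Ω ι : Type*} [Fintype ι] [Nonempty ι] {m : ℕ}
    (hm : 0 < m) {f : ι → Ω → ℝ} (hf : ∀ i x, |f i x| ≤ 1) {i₀ : ι} (hi₀ : f i₀ = fun _ => 1)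
    {z : Fin m → Ω} {g : Ω → ℝ} (hg : ∀ x, 0 ≤ g x) {c a l : ι → ℝ} (hc₀ : c i₀ = 1) {δ : ℝ}
    (hδ : δ < 1) (hz : ∀ i, |∑ j, f i (z j) * g (z j) - m * c i| ≤ m * δ)
    (ha : ∀ i, |a i - c i| ≤ 2 * δ) (hl : ∀ i, |l i| ≤ δ) {h : Fin m → ℝ}
    (hmin : ∀ h' : Fin m → ℝ, (∀ j, 0 ≤ h' j) → ∑ j, h' j = 1 →
      univ.sup' univ_nonempty (fun i => |∑ j, f i (z j) * h j - a i - l i|) ≤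
        univ.sup' univ_nonempty (fun i => |∑ j, f i (z j) * h' j - a i - l i|)) (i : ι) :
    |∑ j, f i (z j) * h j - a i| ≤ 6 * δ := by
  have hm' : (0 : ℝ) < m := Nat.cast_pos.2 hm
  have hW : |∑ j, g (z j) - m| ≤ m * δ := by simpa [hi₀, hc₀] using hz i₀
  have hWpos : 0 < ∑ j, g (z j) := by nlinarith [(abs_le.1 hW).1]
  -- The normalised importance weights are a competitor density of objective value at most 5δ.
  have h₀ := hmin (fun j => g (z j) / ∑ j', g (z j')) (fun j => div_nonneg (hg _) hWpos.le)
    (by rw [← sum_div, div_self hWpos.ne'])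
  have := abs_sub_le_of_sup'_abs_sub_sub_le h₀
    (fun i => abs_sum_mul_div_sum_sub_le (fun j => hf i (z j)) (fun j => hg _) hm' hWpos hW (hz i))
    ha hl i
  linarith

end Deterministic

section Numerics

theorem mul_exp_neg_div_eq {c γ δ σ : ℝ} (hc : 0 < c) (hγ : 0 < γ) (hδ : δ ≠ 0)
    (hσ : σ = δ / Real.log (c / γ)) : c * Real.exp (-δ / σ) = γ := by
  rw [hσ, div_div_eq_mul_div, neg_mul, neg_div, mul_div_cancel_left₀ _ hδ, Real.exp_neg,
    Real.exp_log (by positivity), inv_div, mul_div_cancel₀ _ hc.ne']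

theorem mul_two_mul_exp_le {c γ δ N : ℝ} (hc : 1 ≤ c) (hγ₀ : 0 < γ) (hγ : γ ≤ 1 / 4)
    (hδ : 0 < δ) (hN : (δ ^ 2)⁻¹ * Real.log (c / γ) ≤ N) :
    c * (2 * Real.exp (-(N * (2 * δ) ^ 2) / 2)) ≤ γ / 2 := by
  have hL : Real.exp (-Real.log (c / γ)) = γ / c := by
    rw [Real.exp_neg, Real.exp_log (by positivity), inv_div]
  rw [inv_mul_le_iff₀ (by positivity)] at hN
  have hexp : Real.exp (-(N * (2 * δ) ^ 2) / 2) ≤ (γ / c) ^ 2 :=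
    calc _ ≤ Real.exp (-Real.log (c / γ) + -Real.log (c / γ)) := Real.exp_le_exp.2 (by nlinarith)
      _ = _ := by rw [Real.exp_add, hL, sq]
  calc _ ≤ c * (2 * (γ / c) ^ 2) := by gcongr
    _ = 2 * γ ^ 2 / c := by field_simp
    _ ≤ 2 * γ ^ 2 := div_le_self (by positivity) hc
    _ ≤ γ / 2 := by nlinarith

theorem mul_div_mul_sq_le {c γ δ κ K m : ℝ} (hc : 0 ≤ c) (hγ : 0 < γ) (hδ : 0 < δ) (hm₀ : 0 < m)
    (hκ : κ ≤ K) (hm : (δ ^ 2)⁻¹ * K * c / γ ≤ m) : c * (κ / (m * δ ^ 2)) ≤ γ := by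
  rw [div_le_iff₀ hγ, inv_mul_eq_div, div_mul_eq_mul_div, div_le_iff₀ (by positivity)] at hm
  rw [mul_div_assoc', div_le_iff₀ (by positivity)]
  nlinarith

end Numerics

theorem synthetic_data_accuracy
    {Ω : Type} [MeasurableSpace Ω]
    (μ ν : Measure Ω) [IsProbabilityMeasure μ] [IsProbabilityMeasure ν]
    (hac : ν ≪ μ) (K : ℝ)
    (hκint : Integrable (fun x => ((ν.rnDeriv μ x).toReal) ^ 2) μ)
    (hκ : ∫ x, ((ν.rnDeriv μ x).toReal) ^ 2 ∂μ ≤ K)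
    -- the family of test functions
    {ι : Type*} [Fintype ι] [Nonempty ι] (f : ι → Ω → ℝ)
    (hfmeas : ∀ i, Measurable (f i)) (hfbdd : ∀ i x, |f i x| ≤ 1)
    (hf1 : ∃ i₀, f i₀ = fun _ => (1 : ℝ))
    -- parameters
    (δ γ σ : ℝ) (hδ : δ ∈ Set.Ioc (0 : ℝ) (1 / 2)) (hγ : γ ∈ Set.Ioo (0 : ℝ) (1 / 4))
    (hσ : σ = δ / Real.log ((Fintype.card ι : ℝ) / γ))
    (n m k : ℕ)
    (hn : (δ ^ 2)⁻¹ * Real.log ((Fintype.card ι : ℝ) / γ) ≤ (n : ℝ))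
    (hk : (δ ^ 2)⁻¹ * Real.log ((Fintype.card ι : ℝ) / γ) ≤ (k : ℝ))
    (hm : (δ ^ 2)⁻¹ * K * (Fintype.card ι : ℝ) / γ ≤ (m : ℝ))
    -- randomness sources
    {Θ₀ : Type*} [MeasurableSpace Θ₀] (P₀ : Measure Θ₀) [IsProbabilityMeasure P₀]
    {Θ₁ : Type*} [MeasurableSpace Θ₁] (P₁ : Measure Θ₁) [IsProbabilityMeasure P₁]
    -- the true data X₁,…,Xₙ, i.i.d. from ν
    (X : Fin n → Θ₀ → Ω) (hXmeas : ∀ j, Measurable (X j))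
    (hXlaw : ∀ j, Measure.map (X j) P₀ = ν)
    -- the reduced space Z₁,…,Z_m, i.i.d. from μ
    (Z : Fin m → Θ₀ → Ω) (hZmeas : ∀ j, Measurable (Z j))
    (hZlaw : ∀ j, Measure.map (Z j) P₀ = μ)
    -- the Laplacian noises λ(f), f ∈ F, with parameter σ
    (lam : ι → Θ₀ → ℝ)
    (hlamtail : ∀ i, ∀ t : ℝ, 0 ≤ t →
      (P₀ {θ | t < |lam i θ|}).toReal = Real.exp (-t / σ))
    -- X, Z and λ are jointly independent
    (hindep : iIndepFun
      (β := fun s : (Fin n ⊕ Fin m) ⊕ ι => match s with | .inl _ => Ω | .inr _ => ℝ)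
      (m := fun s => match s with | .inl _ => inferInstance | .inr _ => inferInstance)
      (fun s => match s with
        | .inl (.inl j) => X j
        | .inl (.inr j) => Z j
        | .inr i => lam i) P₀)
    -- h* is a minimizing probability density on Ω* = {Z₁,…,Z_m}
    (hstar : Θ₀ → Fin m → ℝ) (hstarmeas : ∀ j, Measurable (fun θ₀ => hstar θ₀ j))
    (hstar_nonneg : ∀ θ₀ j, 0 ≤ hstar θ₀ j)
    (hstar_min : ∀ θ₀, ∀ h : Fin m → ℝ, (∀ j, 0 ≤ h j) → ∑ j, h j = 1 →
      (univ.sup' univ_nonempty fun i =>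
        |∑ j, f i (Z j θ₀) * hstar θ₀ j - (n : ℝ)⁻¹ * ∑ l, f i (X l θ₀) - lam i θ₀|) ≤
      (univ.sup' univ_nonempty fun i =>
        |∑ j, f i (Z j θ₀) * h j - (n : ℝ)⁻¹ * ∑ l, f i (X l θ₀) - lam i θ₀|))
    -- the bootstrap sample Y₁,…,Y_k, drawn i.i.d. from Ω* with density h*,
    -- encoded by its indices in {1,…,m}
    (Yidx : Fin k → Θ₀ → Θ₁ → Fin m)
    (hYmeas : ∀ l, Measurable (fun p : Θ₀ × Θ₁ => Yidx l p.1 p.2))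
    (hYindep : ∀ θ₀, iIndepFun (fun l => Yidx l θ₀) P₁)
    (hYlaw : ∀ θ₀ l j, P₁ {θ₁ | Yidx l θ₀ θ₁ = j} = ENNReal.ofReal (hstar θ₀ j)) :
    -- conclusion: with probability ≥ 1 − 4γ, the synthetic data is 8δ-accurate
    1 - 4 * γ ≤ ((P₀.prod P₁) {p | ∀ i,
        |(k : ℝ)⁻¹ * ∑ l, f i (Z (Yidx l p.1 p.2) p.1) -
          (n : ℝ)⁻¹ * ∑ j, f i (X j p.1)| ≤ 8 * δ}).toReal := by
  obtain ⟨hδ₀, hδ₁⟩ := hδ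
  obtain ⟨hγ₀, hγ₁⟩ := hγ
  obtain ⟨i₀, hi₀⟩ := hf1
  have hcard : (1 : ℝ) ≤ Fintype.card ι := Nat.one_le_cast.2 Fintype.card_pos
  have hK : 0 < K := one_pos.trans_le <| (one_le_integral_sq_toReal_rnDeriv hac hκint).trans hκ
  have hm₀ : 0 < m := by
    have : (0 : ℝ) < (δ ^ 2)⁻¹ * K * Fintype.card ι / γ := by positivity
    exact_mod_cast this.trans_le hm
  have hnoise := measureReal_iUnion_le_card_mul (P := P₀) fun i => (hlamtail i δ hδ₀.le).le
  have hweights := measureReal_iUnion_le_abs_sum_mul_rnDeriv_sub_le hac hκint hfmeas hfbdd hm₀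
    hZmeas hZlaw (fun j j' hjj' => hindep.indepFun (i := .inl (.inr j)) (j := .inl (.inr j'))
      (by simpa using hjj')) hδ₀
  have hdata := measureReal_iUnion_lt_abs_sample_avg_sub_le hXmeas
    (hindep.precomp (g := fun l => .inl (.inl l)) fun l l' h => by simpa using h) hXlaw hfmeas
    hfbdd (t := 2 * δ) (by positivity)
  have hboot := measureReal_prod_iUnion_lt_abs_resample_avg_sub_le (P₀ := P₀) hZmeas hstarmeas
    hstar_nonneg hYmeas hYindep hYlaw hfmeas hfbdd (t := 2 * δ) (by positivity)
  refine le_trans ?_ (one_sub_le_measureReal_prod_of_forall_mem ?_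
    ((measureReal_union_le _ _).trans (add_le_add ((measureReal_union_le _ _).trans
      (add_le_add hnoise hweights)) hdata)) hboot)
  · have := mul_exp_neg_div_eq (by positivity) hγ₀ hδ₀.ne' hσ
    have := mul_div_mul_sq_le (by positivity) hγ₀ hδ₀ (Nat.cast_pos.2 hm₀) hκ hm
    have := mul_two_mul_exp_le hcard hγ₀ hγ₁.le hδ₀ hn
    have := mul_two_mul_exp_le hcard hγ₀ hγ₁.le hδ₀ hk
    linarith
  · rintro ⟨θ₀, θ₁⟩ hA hC i
    simp only [Set.mem_union, Set.mem_iUnion, Set.mem_ofPred_eq, not_or, not_exists, not_lt,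
      not_le] at hA hC
    obtain ⟨⟨hnoise, hweights⟩, hdata⟩ := hA
    have := abs_sum_mul_sub_le_of_minimizer hm₀ hfbdd hi₀ (fun _ => ENNReal.toReal_nonneg)
      (c := fun i => ∫ x, f i x ∂ν) (by simp [hi₀]) (by linarith) (fun i => (hweights i).le)
      hdata hnoise (hstar_min θ₀) i
    linarith [abs_sub_le ((k : ℝ)⁻¹ * ∑ l, f i (Z (Yidx l θ₀ θ₁) θ₀))
      (∑ j, f i (Z j θ₀) * hstar θ₀ j) ((n : ℝ)⁻¹ * ∑ j, f i (X j θ₀)), hC i]
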